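/- arXiv:2109.07233 — 3 statements merged into one kernel-verified Lean document; each statement's English description precedes it below -/
import Mathlib

section
/- For α > -1 and q, p ∈ ℤ_+, the orthogonality relation ∫_0^∞ e^{-t} t^α L_q^{(α)}(t) L_p^{(α)}(t) dt = Γ(α+1) · C(q+α, q) · δ_{qp} holds, where C(q+α,q) = Γ(q+α+1)/(Γ(α+1)·q!). -/
open scoped BigOperators

/-- The generalized Laguerre polynomial
`L_q^{(α)}(t) = ∑_{i=0}^q (-1)^i / i! * ((α+i+1)⋯(α+q) / (q-i)!) * t^i`. -/
noncomputable def genLaguerre (q : ℕ) (α : ℝ) (t : ℝ) : ℝ :=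
  ∑ i ∈ Finset.range (q + 1),
    (-1 : ℝ) ^ i / (Nat.factorial i) *
      ((∏ j ∈ Finset.range (q - i), (α + i + 1 + j)) / (Nat.factorial (q - i))) * t ^ i

/-!
Expanding both polynomials in monomials turns the integral into a combination of the moments
`∫ e^{-t} t^{α+n} dt = Γ(α+n+1)`. Since `Γ(α+j+1+k) = Γ(α+j+1) (α+j+1)_k`, pairing `t^k` with
`L_p^{(α)}` gives `Γ(α+p+1)/p!` times `∑_j (-1)^j C(p,j) (α+1+j)_k`, a `p`-th finite difference of
the degree-`k` rising factorial polynomial: it vanishes for `k < p` and equals `(-1)^p p!` for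
`k = p`. Hence `L_p^{(α)}` is orthogonal to every `t^k` with `k < p`, and for `q = p` only the
leading coefficient `(-1)^p/p!` of `L_p^{(α)}` contributes.
-/

open MeasureTheory Finset Polynomial Real
open scoped Nat

theorem Polynomial.ascPochhammer_eval_eq_prod_range {R : Type*} [CommSemiring R] (n : ℕ) (r : R) :
    (ascPochhammer R n).eval r = ∏ j ∈ range n, (r + j) := by
  induction n with
  | zero => simp
  | succ n ih => rw [ascPochhammer_succ_eval, ih, prod_range_succ]

theorem Polynomial.sum_range_neg_one_pow_mul_choose_mul_eval_add {R : Type*} [CommRing R]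
    {P : R[X]} {n : ℕ} (hP : P.natDegree ≤ n) (y : R) :
    ∑ k ∈ range (n + 1), (-1) ^ k * n.choose k * P.eval (y + k) =
      if P.natDegree = n then (-1) ^ n * n ! * P.leadingCoeff else 0 := by
  have hsign : ∀ k ∈ range (n + 1), (-1 : R) ^ k = (-1) ^ n * (-1) ^ (n - k) := fun k hk => by
    rw [← pow_add, neg_one_pow_eq_pow_mod_two, neg_one_pow_eq_pow_mod_two (n + (n - k))]
    congr 1
    have := mem_range.mp hk
    omega
  have hΔ : ∑ k ∈ range (n + 1), (-1) ^ k * n.choose k * P.eval (y + k) =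
      (-1) ^ n * (fwdDiff 1)^[n] P.eval y := by
    simp only [fwdDiff_iter_eq_sum_shift, zsmul_eq_mul, nsmul_one, mul_sum]
    refine sum_congr rfl fun k hk => ?_
    rw [hsign k hk]
    push_cast
    ring
  rw [hΔ]
  split_ifs with h
  · subst h
    rw [P.fwdDiff_iter_degree_eq_factorial]
    simp only [Pi.smul_apply, Pi.natCast_apply, smul_eq_mul]
    ring
  · rw [fwdDiff_iter_eq_zero_of_degree_lt (lt_of_le_of_ne hP h), Pi.zero_apply, mul_zero]

namespace Real

theorem Gamma_add_nat_eq_mul_ascPochhammer {x : ℝ} (hx : ∀ k : ℕ, x + k ≠ 0) (n : ℕ) :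
    Gamma (x + n) = Gamma x * (ascPochhammer ℝ n).eval x := by
  induction n with
  | zero => simp
  | succ n ih =>
    rw [Nat.cast_succ, ← add_assoc, Gamma_add_one (hx n), ih, ascPochhammer_succ_eval]
    ring

theorem exp_neg_mul_rpow_mul_pow_eq {t : ℝ} (ht : 0 < t) (α : ℝ) (n : ℕ) :
    exp (-t) * t ^ α * t ^ n = exp (-t) * t ^ (α + n + 1 - 1) := by
  rw [add_sub_cancel_right, rpow_add ht, rpow_natCast, mul_assoc]

theorem integrableOn_exp_neg_mul_rpow_mul_pow {α : ℝ} (hα : -1 < α) (n : ℕ) :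
    IntegrableOn (fun t => exp (-t) * t ^ α * t ^ n) (Set.Ioi 0) :=
  (GammaIntegral_convergent (by linarith [n.cast_nonneg (α := ℝ)])).congr_fun
    (fun _ ht => (exp_neg_mul_rpow_mul_pow_eq ht α n).symm) measurableSet_Ioi

theorem integral_exp_neg_mul_rpow_mul_pow {α : ℝ} (hα : -1 < α) (n : ℕ) :
    ∫ t in Set.Ioi 0, exp (-t) * t ^ α * t ^ n = Gamma (α + n + 1) := by
  rw [Gamma_eq_integral (by linarith [n.cast_nonneg (α := ℝ)])]
  exact setIntegral_congr_fun measurableSet_Ioi fun _ ht => exp_neg_mul_rpow_mul_pow_eq ht α n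

theorem integral_exp_neg_mul_rpow_mul_sum_pow {ι : Type*} {α : ℝ} (hα : -1 < α)
    (s : Finset ι) (c : ι → ℝ) (n : ι → ℕ) :
    ∫ t in Set.Ioi 0, exp (-t) * t ^ α * ∑ i ∈ s, c i * t ^ n i =
      ∑ i ∈ s, c i * Gamma (α + n i + 1) := by
  simp only [mul_sum, mul_left_comm (exp _ * _) (c _)]
  rw [integral_finsetSum _ fun i _ => (integrableOn_exp_neg_mul_rpow_mul_pow hα (n i)).const_mul _]
  simp only [integral_const_mul, integral_exp_neg_mul_rpow_mul_pow hα]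

end Real

noncomputable def laguerreCoeff (q : ℕ) (α : ℝ) (i : ℕ) : ℝ :=
  (-1) ^ i / i ! * ((∏ j ∈ range (q - i), (α + i + 1 + j)) / (q - i)!)

theorem genLaguerre_eq_sum (q : ℕ) (α t : ℝ) :
    genLaguerre q α t = ∑ i ∈ range (q + 1), laguerreCoeff q α i * t ^ i := rfl

theorem laguerreCoeff_self (q : ℕ) (α : ℝ) : laguerreCoeff q α q = (-1) ^ q / q ! := by
  simp [laguerreCoeff]

theorem laguerreCoeff_mul_Gamma {α : ℝ} (hα : -1 < α) {p j : ℕ} (hj : j ≤ p) :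
    laguerreCoeff p α j * Gamma (α + j + 1) = (-1) ^ j * p.choose j * Gamma (α + p + 1) / p ! := by
  have hx : 0 < α + j + 1 := by linarith [j.cast_nonneg (α := ℝ)]
  have hΓ : Gamma (α + j + 1) * ∏ m ∈ range (p - j), (α + j + 1 + m) = Gamma (α + p + 1) := by
    rw [← ascPochhammer_eval_eq_prod_range,
      ← Gamma_add_nat_eq_mul_ascPochhammer fun m => (add_pos_of_pos_of_nonneg hx m.cast_nonneg).ne',
      Nat.cast_sub hj]
    ring_nf
  rw [Nat.cast_choose ℝ hj, ← hΓ, laguerreCoeff]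
  field_simp

theorem sum_laguerreCoeff_mul_Gamma_add {α : ℝ} (hα : -1 < α) {k p : ℕ} (hk : k ≤ p) :
    ∑ j ∈ range (p + 1), laguerreCoeff p α j * Gamma (α + (k + j : ℕ) + 1) =
      if k = p then (-1) ^ p * Gamma (α + p + 1) else 0 := by
  have hterm : ∀ j ∈ range (p + 1), laguerreCoeff p α j * Gamma (α + (k + j : ℕ) + 1) =
      Gamma (α + p + 1) / p ! * ((-1) ^ j * p.choose j * (ascPochhammer ℝ k).eval (α + 1 + j)) := by
    intro j hj
    have hx : 0 < α + j + 1 := by linarith [j.cast_nonneg (α := ℝ)]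
    rw [show α + (k + j : ℕ) + 1 = α + j + 1 + k by push_cast; ring,
      Gamma_add_nat_eq_mul_ascPochhammer fun m => (add_pos_of_pos_of_nonneg hx m.cast_nonneg).ne',
      ← mul_assoc, laguerreCoeff_mul_Gamma hα (Nat.lt_succ_iff.mp (mem_range.mp hj)),
      show α + j + 1 = α + 1 + j by ring]
    ring
  have hdeg : (ascPochhammer ℝ k).natDegree = k := ascPochhammer_natDegree ℝ k
  rw [sum_congr rfl hterm, ← mul_sum,
    sum_range_neg_one_pow_mul_choose_mul_eval_add (hdeg.trans_le hk), hdeg,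
    (monic_ascPochhammer ℝ k).leadingCoeff]
  split_ifs with h
  · subst h
    field_simp
  · rw [mul_zero]

theorem integral_exp_neg_mul_rpow_mul_genLaguerre_mul_genLaguerre_of_le {α : ℝ} (hα : -1 < α)
    {q p : ℕ} (hqp : q ≤ p) :
    ∫ t in Set.Ioi 0, exp (-t) * t ^ α * genLaguerre q α t * genLaguerre p α t =
      if q = p then Gamma (α + p + 1) / p ! else 0 := by
  have hexpand : ∀ t, genLaguerre q α t * genLaguerre p α t =
      ∑ ij ∈ range (q + 1) ×ˢ range (p + 1),
        laguerreCoeff q α ij.1 * laguerreCoeff p α ij.2 * t ^ (ij.1 + ij.2) := fun t => by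
    rw [genLaguerre_eq_sum, genLaguerre_eq_sum, sum_mul_sum, sum_product]
    refine sum_congr rfl fun i _ => sum_congr rfl fun j _ => ?_
    ring
  simp_rw [mul_assoc _ (genLaguerre q α _), hexpand]
  rw [integral_exp_neg_mul_rpow_mul_sum_pow hα, sum_product]
  simp_rw [mul_assoc (laguerreCoeff q α _), ← mul_sum]
  rw [sum_congr rfl fun i hi => by
    rw [sum_laguerreCoeff_mul_Gamma_add hα ((Nat.lt_succ_iff.mp (mem_range.mp hi)).trans hqp)]]
  simp only [mul_ite, mul_zero, sum_ite_eq', mem_range, Nat.lt_succ_iff]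
  by_cases h : q = p
  · subst h
    rw [if_pos le_rfl, if_pos rfl, laguerreCoeff_self, ← mul_assoc, div_mul_eq_mul_div, ← mul_pow,
      neg_one_mul, neg_neg, one_pow, one_div_mul_eq_div]
  · rw [if_neg (by omega), if_neg h]

open MeasureTheory in
theorem laguerre_orthogonality (α : ℝ) (hα : -1 < α) (q p : ℕ) :
    ∫ t in Set.Ioi (0 : ℝ),
        Real.exp (-t) * t ^ α * genLaguerre q α t * genLaguerre p α t =
      Real.Gamma (α + 1) *
        (Real.Gamma ((q : ℝ) + α + 1) / (Real.Gamma (α + 1) * Nat.factorial q)) *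
        (if q = p then 1 else 0) := by
  have hΓ : Gamma (α + 1) ≠ 0 := (Gamma_pos_of_pos (by linarith)).ne'
  rw [mul_div_assoc', mul_div_mul_left _ _ hΓ, add_comm (q : ℝ) α]
  rcases eq_or_ne q p with rfl | hne
  · rw [integral_exp_neg_mul_rpow_mul_genLaguerre_mul_genLaguerre_of_le hα le_rfl, if_pos rfl,
      if_pos rfl, mul_one]
  rw [if_neg hne, mul_zero]
  rcases hne.lt_or_gt with hlt | hgt
  · rw [integral_exp_neg_mul_rpow_mul_genLaguerre_mul_genLaguerre_of_le hα hlt.le, if_neg hne]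
  · simp_rw [mul_right_comm _ (genLaguerre q α _)]
    rw [integral_exp_neg_mul_rpow_mul_genLaguerre_mul_genLaguerre_of_le hα hgt.le, if_neg hne.symm]
end

section
/- For b > 0, the set { r > 0 : ∃ k ∈ ℕ, k ≥ 1, L_2^{(k-2)}(b r²/2) = 0 } equals the union √((2/b)·{(n+1) - √(n+1) : n ≥ 1}) ∪ √((2/b)·{n + √n : n ≥ 1}). -/
open scoped BigOperators

lemma lag2 (α t : ℝ) :
    genLaguerre 2 α t = (t ^ 2 - 2 * (α + 2) * t + (α + 2) * (α + 1)) / 2 := by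
  simp [genLaguerre, Finset.sum_range_succ, Finset.prod_range_succ, Nat.factorial]
  ring

lemma root_iff (k : ℕ) (t : ℝ) :
    genLaguerre 2 ((k : ℝ) - 2) t = 0 ↔
      t = (k : ℝ) + Real.sqrt k ∨ t = (k : ℝ) - Real.sqrt k := by
  have hs : Real.sqrt k * Real.sqrt k = (k : ℝ) :=
    Real.mul_self_sqrt (by positivity)
  rw [lag2]
  have key : (t ^ 2 - 2 * ((k : ℝ) - 2 + 2) * t + ((k : ℝ) - 2 + 2) * ((k : ℝ) - 2 + 1)) / 2
      = (t - ((k : ℝ) + Real.sqrt k)) * (t - ((k : ℝ) - Real.sqrt k)) / 2 := by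
    linear_combination ((1 : ℝ) / 2) * hs
  rw [key]
  rw [div_eq_zero_iff]
  constructor
  · rintro (h | h)
    · rcases mul_eq_zero.mp h with h | h
      · left; linarith
      · right; linarith
    · norm_num at h
  · rintro (h | h)
    · left; rw [h]; ring
    · left; rw [h]; ring

theorem D_two_description (b : ℝ) (hb : 0 < b) :
    {r : ℝ | 0 < r ∧ ∃ k : ℕ, 1 ≤ k ∧ genLaguerre 2 ((k : ℝ) - 2) (b * r ^ 2 / 2) = 0} =
      {r : ℝ | ∃ n : ℕ, 1 ≤ n ∧
          r = Real.sqrt ((2 / b) * (((n : ℝ) + 1) - Real.sqrt ((n : ℝ) + 1)))} ∪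
        {r : ℝ | ∃ n : ℕ, 1 ≤ n ∧
          r = Real.sqrt ((2 / b) * ((n : ℝ) + Real.sqrt n))} := by
  ext r
  simp only [Set.mem_setOf_eq, Set.mem_union]
  constructor
  · rintro ⟨hr, k, hk, heq⟩
    rw [root_iff] at heq
    rcases heq with h | h
    · right
      refine ⟨k, hk, ?_⟩
      have hr2 : r ^ 2 = (2 / b) * ((k : ℝ) + Real.sqrt k) := by
        field_simp at h ⊢
        linarith
      rw [← hr2, Real.sqrt_sq hr.le]
    · left
      have hk2 : 2 ≤ k := by
        by_contra hlt
        push_neg at hlt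
        interval_cases k
        · rw [Nat.cast_one, Real.sqrt_one] at h
          nlinarith [mul_pos hb (pow_pos hr 2)]
      obtain ⟨n, rfl⟩ : ∃ n, k = n + 1 := ⟨k - 1, by omega⟩
      refine ⟨n, by omega, ?_⟩
      have hc : ((n + 1 : ℕ) : ℝ) = (n : ℝ) + 1 := by push_cast; ring
      rw [hc] at h
      have hr2 : r ^ 2 = (2 / b) * (((n : ℝ) + 1) - Real.sqrt ((n : ℝ) + 1)) := by
        field_simp at h ⊢
        linarith
      rw [← hr2, Real.sqrt_sq hr.le]
  · rintro (⟨n, hn, rfl⟩ | ⟨n, hn, rfl⟩)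
    · have h1 : (1 : ℝ) < (n : ℝ) + 1 := by
        have : (1 : ℝ) ≤ (n : ℝ) := by exact_mod_cast hn
        linarith
      have hlt : Real.sqrt ((n : ℝ) + 1) < (n : ℝ) + 1 := by
        rw [show ((n:ℝ)+1) = Real.sqrt (((n:ℝ)+1)^2) by rw [Real.sqrt_sq (by linarith)]]
        nth_rewrite 1 [Real.sqrt_sq]
        · exact Real.sqrt_lt_sqrt (by linarith) (by nlinarith)
        · linarith
      have hx : 0 < (2 / b) * (((n : ℝ) + 1) - Real.sqrt ((n : ℝ) + 1)) := by
        apply mul_pos (by positivity)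
        linarith
      refine ⟨Real.sqrt_pos.mpr hx, n + 1, by omega, ?_⟩
      rw [root_iff]
      right
      rw [Real.sq_sqrt hx.le]
      push_cast
      field_simp
    · have h1 : (1 : ℝ) ≤ (n : ℝ) := by exact_mod_cast hn
      have hx : 0 < (2 / b) * ((n : ℝ) + Real.sqrt n) := by
        apply mul_pos (by positivity)
        have := Real.sqrt_nonneg (n : ℝ)
        linarith
      refine ⟨Real.sqrt_pos.mpr hx, n, hn, ?_⟩
      rw [root_iff]
      left
      rw [Real.sq_sqrt hx.le]
      field_simp
end

section
/- For q ∈ ℕ and any r > 0, the number of indices k ∈ ℤ_+ for which L_q^{(k-q)}(br²/2) = 0 is at most q. -/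
open scoped BigOperators

open Polynomial in
/-- The Laguerre polynomial as a polynomial in α. -/
noncomputable def genLaguerrePoly (q : ℕ) (t : ℝ) : Polynomial ℝ :=
  ∑ i ∈ Finset.range (q + 1),
    C ((-1 : ℝ) ^ i / (Nat.factorial i) / (Nat.factorial (q - i)) * t ^ i) *
      ∏ j ∈ Finset.range (q - i), (X + C ((i : ℝ) + 1 + j))

open Polynomial in
lemma genLaguerrePoly_eval (q : ℕ) (t α : ℝ) :
    (genLaguerrePoly q t).eval α = genLaguerre q α t := by
  unfold genLaguerrePoly genLaguerre
  rw [eval_finset_sum]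
  refine Finset.sum_congr rfl fun i _ => ?_
  rw [eval_mul, eval_C, eval_prod]
  simp only [eval_add, eval_X, eval_C]
  ring_nf

open Polynomial in
lemma genLaguerrePoly_natDegree_le (q : ℕ) (t : ℝ) :
    (genLaguerrePoly q t).natDegree ≤ q := by
  unfold genLaguerrePoly
  refine Polynomial.natDegree_sum_le_of_forall_le _ _ fun i hi => ?_
  calc (C ((-1 : ℝ) ^ i / (Nat.factorial i) / (Nat.factorial (q - i)) * t ^ i) *
      ∏ j ∈ Finset.range (q - i), (X + C ((i : ℝ) + 1 + j))).natDegree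
      ≤ _ + _ := natDegree_mul_le
    _ ≤ 0 + (q - i) := by
        gcongr
        · exact (natDegree_C _).le
        · calc (∏ j ∈ Finset.range (q - i), (X + C ((i : ℝ) + 1 + j))).natDegree
              ≤ ∑ j ∈ Finset.range (q - i), (X + C ((i : ℝ) + 1 + j)).natDegree :=
                natDegree_prod_le _ _
            _ = q - i := by
                simp only [natDegree_X_add_C]
                simp
    _ ≤ q := by omega

open Polynomial in
lemma genLaguerrePoly_coeff_q (q : ℕ) (t : ℝ) :
    (genLaguerrePoly q t).coeff q = 1 / Nat.factorial q := by
  unfold genLaguerrePoly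
  rw [finset_sum_coeff]
  rw [Finset.sum_eq_single 0]
  · have hm : (∏ j ∈ Finset.range q, (X + C ((0 : ℝ) + 1 + j))).Monic :=
      monic_prod_of_monic _ _ fun j _ => monic_X_add_C _
    have hd : (∏ j ∈ Finset.range q, (X + C ((0 : ℝ) + 1 + j))).natDegree = q := by
      rw [natDegree_prod _ _ fun j _ => (monic_X_add_C _).ne_zero]
      simp only [natDegree_X_add_C]
      simp
    have hc := hm.coeff_natDegree
    rw [hd] at hc
    simp only [Nat.sub_zero, pow_zero, mul_one, Nat.factorial_zero, Nat.cast_one, Nat.cast_zero]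
    rw [coeff_C_mul, hc]
    simp
  · intro i hi hi0
    apply coeff_eq_zero_of_natDegree_lt
    calc (C ((-1 : ℝ) ^ i / (Nat.factorial i) / (Nat.factorial (q - i)) * t ^ i) *
        ∏ j ∈ Finset.range (q - i), (X + C ((i : ℝ) + 1 + j))).natDegree
        ≤ _ + _ := natDegree_mul_le
      _ ≤ 0 + (q - i) := by
          gcongr
          · exact (natDegree_C _).le
          · calc (∏ j ∈ Finset.range (q - i), (X + C ((i : ℝ) + 1 + j))).natDegree
                ≤ ∑ j ∈ Finset.range (q - i), (X + C ((i : ℝ) + 1 + j)).natDegree :=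
                  natDegree_prod_le _ _
              _ = q - i := by
                simp only [natDegree_X_add_C]
                simp
      _ < q := by
          simp only [Finset.mem_range] at hi
          omega
  · intro h; simp at h

theorem card_vanishing_indices_le (b : ℝ) (hb : 0 < b) (q : ℕ) (hq : 1 ≤ q)
    (r : ℝ) (hr : 0 < r) :
    {k : ℕ | genLaguerre q ((k : ℝ) - (q : ℝ)) (b * r ^ 2 / 2) = 0}.Finite ∧
      {k : ℕ | genLaguerre q ((k : ℝ) - (q : ℝ)) (b * r ^ 2 / 2) = 0}.ncard ≤ q := by
  set t := b * r ^ 2 / 2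
  set P := genLaguerrePoly q t with hP
  have hPne : P ≠ 0 := fun h => by
    have := genLaguerrePoly_coeff_q q t
    rw [← hP, h] at this
    simp at this
    exact Nat.factorial_ne_zero q (by exact_mod_cast this.symm)
  have hroots : {α : ℝ | P.IsRoot α}.Finite := Polynomial.finite_setOf_isRoot hPne
  have hrcard : {α : ℝ | P.IsRoot α}.ncard ≤ q := by
    have : {α : ℝ | P.IsRoot α} = ↑P.roots.toFinset := by
      ext α
      simp [Polynomial.mem_roots, hPne]
    rw [this, Set.ncard_coe_finset]
    calc P.roots.toFinset.card ≤ Multiset.card P.roots := P.roots.toFinset_card_le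
      _ ≤ P.natDegree := P.card_roots'
      _ ≤ q := genLaguerrePoly_natDegree_le q t
  have hf : Function.Injective (fun k : ℕ => (k : ℝ) - q) := by
    intro a c h
    simp only at h
    exact_mod_cast Nat.cast_injective (sub_left_injective h)
  have hsub : {k : ℕ | genLaguerre q ((k : ℝ) - (q : ℝ)) t = 0}
      = (fun k : ℕ => (k : ℝ) - q) ⁻¹' {α : ℝ | P.IsRoot α} := by
    ext k
    simp [Polynomial.IsRoot, genLaguerrePoly_eval, hP]
  rw [hsub]
  have hfin := hroots.preimage hf.injOn
  refine ⟨hfin, ?_⟩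
  calc ((fun k : ℕ => (k : ℝ) - q) ⁻¹' {α : ℝ | P.IsRoot α}).ncard
      = ((fun k : ℕ => (k : ℝ) - q) '' ((fun k : ℕ => (k : ℝ) - q) ⁻¹' {α : ℝ | P.IsRoot α})).ncard :=
        (Set.ncard_image_of_injective _ hf).symm
    _ ≤ {α : ℝ | P.IsRoot α}.ncard := Set.ncard_le_ncard (Set.image_preimage_subset _ _) hroots
    _ ≤ q := hrcard
end
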